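/- arXiv:0907.2047 — 2 statements merged into one kernel-verified Lean document; each statement's English description precedes it below -/
import Mathlib

section
/- The four 32-element sets S_L = {±e_i : 0 ≤ i ≤ 15}, S_L^α = {±e_i : i ∈ {0,1,2,3,8,9,10,11,20,21,22,23,28,29,30,31}}, S_L^β = {±e_i : i ∈ {0,1,2,3,12,13,14,15,20,21,22,23,24,25,26,27}}, and S_L^γ = {±e_i : i ∈ {0,1,2,3,4,5,6,7,24,25,26,27,28,29,30,31}} are each subloops of T_L, and they are pairwise non-isomorphic. -/
/-- Iterated Cayley–Dickson doubling starting from `ℝ`. -/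
def CD : ℕ → Type
  | 0 => ℝ
  | n + 1 => CD n × CD n

instance cdAddCommGroup : ∀ n, AddCommGroup (CD n)
  | 0 => inferInstanceAs (AddCommGroup ℝ)
  | n + 1 => letI := cdAddCommGroup n; inferInstanceAs (AddCommGroup (CD n × CD n))

noncomputable instance cdModule : ∀ n, Module ℝ (CD n)
  | 0 => inferInstanceAs (Module ℝ ℝ)
  | n + 1 => letI := cdModule n; inferInstanceAs (Module ℝ (CD n × CD n))

/-- Cayley–Dickson conjugation, starting from the identity on `ℝ`. -/
def cdConj : ∀ n, CD n → CD n
  | 0, x => x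
  | n + 1, x => (cdConj n x.1, -x.2)

/-- Cayley–Dickson multiplication: `(a,b)(c,d) = (ac − d b̄, ā d + c b)`. -/
def cdMul : ∀ n, CD n → CD n → CD n
  | 0, x, y => @Mul.mul ℝ _ x y
  | n + 1, x, y =>
      (cdMul n x.1 y.1 - cdMul n y.2 (cdConj n x.2),
       cdMul n (cdConj n x.1) y.2 + cdMul n y.1 x.2)

instance cdMulInst (n : ℕ) : Mul (CD n) := ⟨cdMul n⟩

instance cdOne : ∀ n, One (CD n)
  | 0 => ⟨(1 : ℝ)⟩
  | n + 1 => letI := cdOne n; ⟨((1 : CD n), 0)⟩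

/-- The standard basis elements: under a doubling step `A → A × A`, a basis element
`e k` of `A` gives `e k = (e k, 0)` and `e (k + dim A) = (0, e k)`. -/
def cdE : ∀ n, ℕ → CD n
  | 0, _ => (1 : ℝ)
  | n + 1, k => if k < 2 ^ n then (cdE n k, 0) else (0, cdE n (k - 2 ^ n))

/-- The trigintaduonions: the 32-dimensional real Cayley–Dickson algebra. -/
abbrev TT := CD 5

/-- The 32 standard basis elements `e 0 = 1, e 1, …, e 31` of `𝕋`. -/
def e (i : ℕ) : TT := cdE 5 i

/-- The trigintaduonion loop `T_L = {±e 0, ±e 1, …, ±e 31}`. -/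
def TL : Set TT := {x | ∃ i < 32, x = e i ∨ x = -e i}

/-- A subloop of `T_L`: a nonempty subset of `T_L` closed under multiplication. -/
def IsSubloop (N : Set TT) : Prop :=
  N ⊆ TL ∧ N.Nonempty ∧ ∀ x ∈ N, ∀ y ∈ N, x * y ∈ N

/-- Two subsets of `T_L` are isomorphic (as loops) if some bijection between them
preserves multiplication. -/
def LoopIso (A B : Set TT) : Prop :=
  ∃ f : TT → TT, Set.BijOn f A B ∧ ∀ x ∈ A, ∀ y ∈ A, f (x * y) = f x * f y

/-- The standard sedenion loop `S_L = {±e i : 0 ≤ i ≤ 15}`. -/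
def SL : Set TT := {x | ∃ i < 16, x = e i ∨ x = -e i}

/-- Index set of the α-sedenion loop. -/
def idxα : Set ℕ := {0, 1, 2, 3, 8, 9, 10, 11, 20, 21, 22, 23, 28, 29, 30, 31}

/-- Index set of the β-sedenion loop. -/
def idxβ : Set ℕ := {0, 1, 2, 3, 12, 13, 14, 15, 20, 21, 22, 23, 24, 25, 26, 27}

/-- Index set of the γ-sedenion loop. -/
def idxγ : Set ℕ := {0, 1, 2, 3, 4, 5, 6, 7, 24, 25, 26, 27, 28, 29, 30, 31}

/-- The α-sedenion loop `S_L^α`. -/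
def SLα : Set TT := {x | ∃ i ∈ idxα, x = e i ∨ x = -e i}

/-- The β-sedenion loop `S_L^β`. -/
def SLβ : Set TT := {x | ∃ i ∈ idxβ, x = e i ∨ x = -e i}

/-- The γ-sedenion loop `S_L^γ`. -/
def SLγ : Set TT := {x | ∃ i ∈ idxγ, x = e i ∨ x = -e i}

/-- The octonion loop `O_L = {±e i : 0 ≤ i ≤ 7}`. -/
def OL : Set TT := {x | ∃ i < 8, x = e i ∨ x = -e i}

/-- The quasi-octonion loop `Õ_L = {±e i : i ∈ {0,1,2,3,12,13,14,15}}`. -/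
def QOL : Set TT :=
  {x | ∃ i ∈ ({0, 1, 2, 3, 12, 13, 14, 15} : Set ℕ), x = e i ∨ x = -e i}

/-!
In the Cayley–Dickson basis, `e i * e j = ± e (i ^^^ j)` with a sign given by a recursion along
the doublings (`cdE_mul_cdE`). Each of the four sets is `{± e i | i ∈ I}` for an index set `I`
closed under xor, hence closed under multiplication.

To tell them apart, count for a pair `x, y` of a loop `A` the `z ∈ A` with `(x y) z = x (y z)`.
A multiplicative bijection preserves these counts, so the set of values they take is an
isomorphism invariant; signs factor out, so it is computed from the sign table. Some pair in `S_L`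
has 8 associating partners, which happens for no pair in the other three loops; `S_L^α` has pairs
with 16 and with 24, values that do not occur in `S_L^β` and `S_L^γ` respectively; `S_L^β` has a
pair with 28, which does not occur in `S_L^γ`.
-/

section XorTopBit

variable {i j n : ℕ}

lemma add_two_pow_eq_xor (h : i < 2 ^ n) : i + 2 ^ n = i ^^^ 2 ^ n := by
  apply Nat.eq_of_testBit_eq
  intro k
  rw [Nat.add_comm, Nat.testBit_xor, Nat.testBit_two_pow]
  rcases lt_trichotomy k n with hk | rfl | hk
  · simp [Nat.testBit_two_pow_add_gt hk, hk.ne']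
  · simp [Nat.testBit_two_pow_add_eq, Nat.testBit_lt_two_pow h]
  · have hi : i < 2 ^ k := h.trans (Nat.pow_lt_pow_right one_lt_two hk)
    have hsum : 2 ^ n + i < 2 ^ k := by
      have := Nat.pow_le_pow_right two_pos hk
      rw [pow_succ] at this
      omega
    simp [Nat.testBit_lt_two_pow hi, Nat.testBit_lt_two_pow hsum, hk.ne]

lemma add_two_pow_xor (hi : i < 2 ^ n) (hj : j < 2 ^ n) :
    (i + 2 ^ n) ^^^ j = (i ^^^ j) + 2 ^ n := by
  rw [add_two_pow_eq_xor hi, add_two_pow_eq_xor (Nat.xor_lt_two_pow hi hj), Nat.xor_assoc,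
    Nat.xor_comm (2 ^ n), Nat.xor_assoc]

lemma xor_add_two_pow (hi : i < 2 ^ n) (hj : j < 2 ^ n) :
    i ^^^ (j + 2 ^ n) = (i ^^^ j) + 2 ^ n := by
  rw [Nat.xor_comm, add_two_pow_xor hj hi, Nat.xor_comm]

lemma add_two_pow_xor_add_two_pow (hi : i < 2 ^ n) (hj : j < 2 ^ n) :
    (i + 2 ^ n) ^^^ (j + 2 ^ n) = i ^^^ j := by
  rw [add_two_pow_eq_xor hi, add_two_pow_eq_xor hj, Nat.xor_assoc, ← Nat.xor_assoc (2 ^ n),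
    Nat.xor_comm (2 ^ n), Nat.xor_assoc, Nat.xor_self, Nat.xor_zero]

lemma lt_two_pow_succ_cases (h : i < 2 ^ (n + 1)) :
    i < 2 ^ n ∨ ∃ i' < 2 ^ n, i = i' + 2 ^ n := by
  rw [pow_succ] at h
  by_cases hi : i < 2 ^ n
  · exact .inl hi
  · exact .inr ⟨i - 2 ^ n, by omega, by omega⟩

end XorTopBit

def cdMk {n : ℕ} (a b : CD n) : CD (n + 1) := (a, b)

section CayleyDickson

variable {n : ℕ}

lemma cdMk_fst_snd (x : CD (n + 1)) : cdMk x.1 x.2 = x := rfl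

@[simp] lemma cdMk_inj {a b c d : CD n} : cdMk a b = cdMk c d ↔ a = c ∧ b = d := Prod.mk_inj

@[simp] lemma cdMk_zero : cdMk (0 : CD n) 0 = 0 := rfl

@[simp] lemma neg_cdMk (a b : CD n) : -cdMk a b = cdMk (-a) (-b) := rfl

@[simp] lemma cdConj_cdMk (a b : CD n) : cdConj (n + 1) (cdMk a b) = cdMk (cdConj n a) (-b) := rfl

@[simp] lemma cdMk_mul_cdMk (a b c d : CD n) :
    cdMk a b * cdMk c d = cdMk (a * c - d * cdConj n b) (cdConj n a * d + c * b) := rfl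

end CayleyDickson

lemma cdConj_zero : ∀ n, cdConj n 0 = 0
  | 0 => rfl
  | n + 1 => by rw [← cdMk_zero, cdConj_cdMk, cdConj_zero n, neg_zero]

lemma cdConj_neg : ∀ n (x : CD n), cdConj n (-x) = -cdConj n x
  | 0, _ => rfl
  | n + 1, x => by
    rw [← cdMk_fst_snd x]
    simp [cdConj_neg n]

lemma cd_zero_mul_and_mul_zero : ∀ n (x : CD n), (0 : CD n) * x = 0 ∧ x * 0 = 0
  | 0, x => ⟨zero_mul (M₀ := ℝ) x, mul_zero (M₀ := ℝ) x⟩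
  | n + 1, x => by
    rw [← cdMk_fst_snd x, ← cdMk_zero (n := n)]
    simp only [cdMk_mul_cdMk, cdConj_zero, cd_zero_mul_and_mul_zero n, sub_self, add_zero,
      and_self]

lemma cd_neg_mul_and_mul_neg : ∀ n (x y : CD n), -x * y = -(x * y) ∧ x * -y = -(x * y)
  | 0, x, y => ⟨neg_mul (α := ℝ) x y, mul_neg (α := ℝ) x y⟩
  | n + 1, x, y => by
    rw [← cdMk_fst_snd x, ← cdMk_fst_snd y]
    simp only [neg_cdMk, cdMk_mul_cdMk, cdConj_neg, cd_neg_mul_and_mul_neg n, cdMk_inj]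
    constructor <;> constructor <;> abel

instance (n : ℕ) : MulZeroClass (CD n) where
  zero_mul x := (cd_zero_mul_and_mul_zero n x).1
  mul_zero x := (cd_zero_mul_and_mul_zero n x).2

instance (n : ℕ) : HasDistribNeg (CD n) where
  neg_mul x y := (cd_neg_mul_and_mul_neg n x y).1
  mul_neg x y := (cd_neg_mul_and_mul_neg n x y).2

/-- The sign in `e i * e j = ± e (i ^^^ j)` in `CD n`, `true` standing for `+`. The four cases
are the doubling formula for `(e i, 0)` and `(0, e i)`, with `conj (e i) = -e i` for `i ≠ 0`. -/
def cdSign : ℕ → ℕ → ℕ → Bool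
  | 0, _, _ => true
  | n + 1, i, j =>
    if i < 2 ^ n then
      if j < 2 ^ n then cdSign n i j else decide (i = 0) == cdSign n i (j - 2 ^ n)
    else
      if j < 2 ^ n then cdSign n j (i - 2 ^ n)
      else !(decide (i - 2 ^ n = 0) == cdSign n (j - 2 ^ n) (i - 2 ^ n))

def cdSignedE (n : ℕ) (s : Bool) (i : ℕ) : CD n := if s then cdE n i else -cdE n i

section SignedBasisElement

variable {n : ℕ}

@[simp] lemma cdSignedE_true (i : ℕ) : cdSignedE n true i = cdE n i := rfl

@[simp] lemma cdSignedE_false (i : ℕ) : cdSignedE n false i = -cdE n i := rfl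

@[simp] lemma cdSignedE_not (s : Bool) (i : ℕ) : cdSignedE n (!s) i = -cdSignedE n s i := by
  cases s <;> simp

lemma cdE_succ_of_lt {i : ℕ} (h : i < 2 ^ n) : cdE (n + 1) i = cdMk (cdE n i) 0 := if_pos h

lemma cdE_succ_add_two_pow (i : ℕ) : cdE (n + 1) (i + 2 ^ n) = cdMk 0 (cdE n i) := by
  simp only [cdE, Nat.add_sub_cancel]
  exact if_neg (by omega)

lemma cdSignedE_succ_of_lt (s : Bool) {i : ℕ} (h : i < 2 ^ n) :
    cdSignedE (n + 1) s i = cdMk (cdSignedE n s i) 0 := by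
  cases s <;> simp [cdE_succ_of_lt h]

lemma cdSignedE_succ_add_two_pow (s : Bool) (i : ℕ) :
    cdSignedE (n + 1) s (i + 2 ^ n) = cdMk 0 (cdSignedE n s i) := by
  cases s <;> simp [cdE_succ_add_two_pow]

end SignedBasisElement

lemma cdConj_cdE : ∀ n, ∀ i < 2 ^ n, cdConj n (cdE n i) = cdSignedE n (decide (i = 0)) i
  | 0, i, h => by
    obtain rfl : i = 0 := by simpa using h
    rfl
  | n + 1, i, h => by
    rcases lt_two_pow_succ_cases h with hi | ⟨i, hi, rfl⟩
    · rw [cdE_succ_of_lt hi, cdSignedE_succ_of_lt _ hi, cdConj_cdMk, cdConj_cdE n i hi, neg_zero]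
    · rw [cdE_succ_add_two_pow, cdSignedE_succ_add_two_pow, cdConj_cdMk, cdConj_zero,
        show decide (i + 2 ^ n = 0) = false by simp, cdSignedE_false]

lemma cdE_mul_cdE : ∀ n, ∀ i < 2 ^ n, ∀ j < 2 ^ n,
    cdE n i * cdE n j = cdSignedE n (cdSign n i j) (i ^^^ j)
  | 0, i, hi, j, hj => by
    obtain rfl : i = 0 := by simpa using hi
    obtain rfl : j = 0 := by simpa using hj
    exact mul_one (1 : ℝ)
  | n + 1, i, hi', j, hj' => by
    have ih := cdE_mul_cdE n
    rcases lt_two_pow_succ_cases hi' with hi | ⟨i, hi, rfl⟩ <;>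
      rcases lt_two_pow_succ_cases hj' with hj | ⟨j, hj, rfl⟩
    · rw [cdE_succ_of_lt hi, cdE_succ_of_lt hj,
        cdSignedE_succ_of_lt _ (Nat.xor_lt_two_pow hi hj)]
      simp [cdSign, hi, hj, cdConj_zero, ih]
    · rw [cdE_succ_of_lt hi, cdE_succ_add_two_pow, xor_add_two_pow hi hj,
        cdSignedE_succ_add_two_pow]
      rcases eq_or_ne i 0 with rfl | h0 <;>
        simp [cdSign, cdConj_zero, cdConj_cdE, ih _ hi _ hj, *]
    · rw [cdE_succ_add_two_pow, cdE_succ_of_lt hj, add_two_pow_xor hi hj, Nat.xor_comm,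
        cdSignedE_succ_add_two_pow]
      simp [cdSign, hi, hj, cdConj_zero, ih]
    · rw [cdE_succ_add_two_pow, cdE_succ_add_two_pow, add_two_pow_xor_add_two_pow hi hj,
        Nat.xor_comm, cdSignedE_succ_of_lt _ (Nat.xor_lt_two_pow hj hi)]
      rcases eq_or_ne i 0 with rfl | h0 <;>
        simp [cdSign, cdConj_zero, cdConj_cdE, ih _ hj _ hi, *]

lemma cdSignedE_mul_cdSignedE {n : ℕ} (s t : Bool) {i j : ℕ} (hi : i < 2 ^ n) (hj : j < 2 ^ n) :
    cdSignedE n s i * cdSignedE n t j = cdSignedE n ((s == t) == cdSign n i j) (i ^^^ j) := by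
  cases s <;> cases t <;> simp [cdE_mul_cdE n i hi j hj]

lemma cdSignedE_ne_zero : ∀ n (s : Bool), ∀ i < 2 ^ n, cdSignedE n s i ≠ 0
  | 0, s, i, _ => by
    change (if s then (1 : ℝ) else -1) ≠ 0
    cases s <;> norm_num
  | n + 1, s, i, h => by
    rcases lt_two_pow_succ_cases h with hi | ⟨i, hi, rfl⟩
    · simp [cdSignedE_succ_of_lt _ hi, ← cdMk_zero, cdSignedE_ne_zero n s i hi]
    · simp [cdSignedE_succ_add_two_pow, ← cdMk_zero, cdSignedE_ne_zero n s i hi]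

lemma cdSignedE_inj : ∀ n {s t : Bool} {i j : ℕ}, i < 2 ^ n → j < 2 ^ n →
    (cdSignedE n s i = cdSignedE n t j ↔ s = t ∧ i = j)
  | 0, s, t, i, j, hi, hj => by
    obtain rfl : i = 0 := by simpa using hi
    obtain rfl : j = 0 := by simpa using hj
    change (if s then (1 : ℝ) else -1) = (if t then 1 else -1) ↔ s = t ∧ 0 = 0
    cases s <;> cases t <;> norm_num
  | n + 1, s, t, i, j, hi', hj' => by
    rcases lt_two_pow_succ_cases hi' with hi | ⟨i, hi, rfl⟩ <;>
      rcases lt_two_pow_succ_cases hj' with hj | ⟨j, hj, rfl⟩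
    · simp [cdSignedE_succ_of_lt _ hi, cdSignedE_succ_of_lt _ hj, cdSignedE_inj n hi hj]
    · simp [cdSignedE_succ_of_lt _ hi, cdSignedE_succ_add_two_pow, cdSignedE_ne_zero n s i hi]
      omega
    · simp [cdSignedE_succ_of_lt _ hj, cdSignedE_succ_add_two_pow,
        (cdSignedE_ne_zero n t j hj).symm]
      omega
    · simp [cdSignedE_succ_add_two_pow, cdSignedE_inj n hi hj]

section Associator

variable {M N : Type*} [Mul M] [Mul N]

noncomputable def assocCount (A : Set M) (x y : M) : ℕ :=
  {z ∈ A | x * y * z = x * (y * z)}.ncard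

def assocSpectrum (A : Set M) : Set ℕ := {m | ∃ x ∈ A, ∃ y ∈ A, assocCount A x y = m}

section Transport

variable {A : Set M} {B : Set N} {f : M → N}

lemma assocCount_apply_eq_of_bijOn (hf : Set.BijOn f A B)
    (hmul : ∀ x ∈ A, ∀ y ∈ A, f (x * y) = f x * f y)
    (hA : ∀ x ∈ A, ∀ y ∈ A, x * y ∈ A)
    {x y : M} (hx : x ∈ A) (hy : y ∈ A) : assocCount B (f x) (f y) = assocCount A x y := by
  have hmul₃ : ∀ z ∈ A,
      f (x * y * z) = f x * f y * f z ∧ f (x * (y * z)) = f x * (f y * f z) :=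
    fun z hz => ⟨by rw [hmul _ (hA x hx y hy) z hz, hmul x hx y hy],
      by rw [hmul x hx _ (hA y hy z hz), hmul y hy z hz]⟩
  have himage : f '' {z ∈ A | x * y * z = x * (y * z)} =
      {w ∈ B | f x * f y * w = f x * (f y * w)} := by
    ext w
    constructor
    · rintro ⟨z, ⟨hz, hassoc⟩, rfl⟩
      exact ⟨hf.mapsTo hz, by rw [← (hmul₃ z hz).1, ← (hmul₃ z hz).2, hassoc]⟩
    · rintro ⟨hw, hassoc⟩
      obtain ⟨z, hz, rfl⟩ := hf.surjOn hw
      refine ⟨z, ⟨hz, hf.injOn (hA _ (hA x hx y hy) z hz) (hA x hx _ (hA y hy z hz)) ?_⟩,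
        rfl⟩
      rw [(hmul₃ z hz).1, (hmul₃ z hz).2, hassoc]
  rw [assocCount, assocCount, ← himage, (hf.injOn.mono fun _ h => h.1).ncard_image]

lemma assocSpectrum_eq_of_bijOn (hf : Set.BijOn f A B)
    (hmul : ∀ x ∈ A, ∀ y ∈ A, f (x * y) = f x * f y)
    (hA : ∀ x ∈ A, ∀ y ∈ A, x * y ∈ A) :
    assocSpectrum B = assocSpectrum A := by
  ext m
  constructor
  · rintro ⟨_, hx', _, hy', rfl⟩
    obtain ⟨x, hx, rfl⟩ := hf.surjOn hx'
    obtain ⟨y, hy, rfl⟩ := hf.surjOn hy'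
    exact ⟨x, hx, y, hy, (assocCount_apply_eq_of_bijOn hf hmul hA hx hy).symm⟩
  · rintro ⟨x, hx, y, hy, rfl⟩
    exact ⟨f x, hf.mapsTo hx, f y, hf.mapsTo hy, assocCount_apply_eq_of_bijOn hf hmul hA hx hy⟩

end Transport

variable [HasDistribNeg M]

@[simp] lemma assocCount_neg_left (A : Set M) (x y : M) :
    assocCount A (-x) y = assocCount A x y := by
  simp [assocCount]

@[simp] lemma assocCount_neg_right (A : Set M) (x y : M) :
    assocCount A x (-y) = assocCount A x y := by
  simp [assocCount]

end Associator

def cdSignedBasis (n : ℕ) (I : Set ℕ) : Set (CD n) :=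
  {x | ∃ i ∈ I, x = cdE n i ∨ x = -cdE n i}

/-- The number of `k ∈ I` for which `e i`, `e j`, `e k` associate, read off the sign table
(see `cdE_mul_cdE_mul_cdE_eq_iff`). -/
def cdAssocCount (n : ℕ) (I : Finset ℕ) (i j : ℕ) : ℕ :=
  (I.filter fun k =>
    (cdSign n i j == cdSign n (i ^^^ j) k) = (cdSign n j k == cdSign n i (j ^^^ k))).card

section SignedBasis

variable {n : ℕ}

lemma mem_cdSignedBasis {S : Set ℕ} {x : CD n} :
    x ∈ cdSignedBasis n S ↔ ∃ s, ∃ i ∈ S, cdSignedE n s i = x := by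
  constructor
  · rintro ⟨i, hi, rfl | rfl⟩
    exacts [⟨true, i, hi, rfl⟩, ⟨false, i, hi, rfl⟩]
  · rintro ⟨_ | _, i, hi, rfl⟩
    exacts [⟨i, hi, .inr rfl⟩, ⟨i, hi, .inl rfl⟩]

lemma mul_mem_cdSignedBasis {S : Set ℕ} (hS : ∀ i ∈ S, i < 2 ^ n)
    (hxor : ∀ i ∈ S, ∀ j ∈ S, i ^^^ j ∈ S) {x y : CD n} (hx : x ∈ cdSignedBasis n S)
    (hy : y ∈ cdSignedBasis n S) : x * y ∈ cdSignedBasis n S := by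
  obtain ⟨s, i, hi, rfl⟩ := mem_cdSignedBasis.1 hx
  obtain ⟨t, j, hj, rfl⟩ := mem_cdSignedBasis.1 hy
  rw [cdSignedE_mul_cdSignedE s t (hS i hi) (hS j hj)]
  exact mem_cdSignedBasis.2 ⟨_, _, hxor i hi j hj, rfl⟩

variable {I : Finset ℕ}

lemma ncard_cdSignedBasis_filter (hI : ∀ i ∈ I, i < 2 ^ n) (P : CD n → Prop) [DecidablePred P]
    (hP : ∀ x, P (-x) ↔ P x) :
    {x ∈ cdSignedBasis n I | P x}.ncard = 2 * (I.filter fun i => P (cdE n i)).card := by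
  have himage : {x ∈ cdSignedBasis n I | P x} = (fun p : Bool × ℕ => cdSignedE n p.1 p.2) ''
      ((Finset.univ ×ˢ I.filter fun i => P (cdE n i) : Finset (Bool × ℕ)) :
        Set (Bool × ℕ)) := by
    ext x
    simp only [Set.mem_ofPred_eq, mem_cdSignedBasis, Finset.coe_product, Finset.coe_univ,
      Finset.coe_filter, Set.mem_image, Set.mem_prod, Set.mem_univ, true_and, Prod.exists]
    constructor
    · rintro ⟨⟨s, i, hi, rfl⟩, hPx⟩
      refine ⟨s, i, ⟨hi, ?_⟩, rfl⟩
      cases s <;> simpa [hP] using hPx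
    · rintro ⟨s, i, ⟨hi, hPi⟩, rfl⟩
      refine ⟨⟨s, i, hi, rfl⟩, ?_⟩
      cases s <;> simpa [hP] using hPi
  rw [himage, Set.InjOn.ncard_image, Set.ncard_coe_finset, Finset.card_product]
  · simp
  · rintro ⟨s, i⟩ hsi ⟨t, j⟩ htj h
    simp only [Finset.coe_product, Finset.coe_univ, Finset.coe_filter, Set.mem_prod,
      Set.mem_univ, Set.mem_ofPred_eq, true_and] at hsi htj
    obtain ⟨rfl, rfl⟩ := (cdSignedE_inj n (hI i hsi.1) (hI j htj.1)).1 h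
    rfl

lemma ncard_cdSignedBasis (hI : ∀ i ∈ I, i < 2 ^ n) :
    (cdSignedBasis n I).ncard = 2 * I.card := by
  simpa using ncard_cdSignedBasis_filter hI (fun _ => True) (fun _ => Iff.rfl)

lemma cdE_mul_cdE_mul_cdE_eq_iff {i j k : ℕ} (hi : i < 2 ^ n) (hj : j < 2 ^ n) (hk : k < 2 ^ n) :
    cdE n i * cdE n j * cdE n k = cdE n i * (cdE n j * cdE n k) ↔
      (cdSign n i j == cdSign n (i ^^^ j) k) = (cdSign n j k == cdSign n i (j ^^^ k)) := by
  simp only [← cdSignedE_true]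
  rw [cdSignedE_mul_cdSignedE _ _ hi hj, cdSignedE_mul_cdSignedE _ _ hj hk,
    cdSignedE_mul_cdSignedE _ _ (Nat.xor_lt_two_pow hi hj) hk,
    cdSignedE_mul_cdSignedE _ _ hi (Nat.xor_lt_two_pow hj hk), Nat.xor_assoc,
    cdSignedE_inj n (Nat.xor_lt_two_pow hi (Nat.xor_lt_two_pow hj hk))
      (Nat.xor_lt_two_pow hi (Nat.xor_lt_two_pow hj hk))]
  simp

lemma assocCount_cdSignedBasis (hI : ∀ i ∈ I, i < 2 ^ n) {i j : ℕ} (hi : i < 2 ^ n)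
    (hj : j < 2 ^ n) :
    assocCount (cdSignedBasis n I) (cdE n i) (cdE n j) = 2 * cdAssocCount n I i j := by
  classical
  rw [assocCount, ncard_cdSignedBasis_filter hI _ (fun x => by simp), cdAssocCount,
    Finset.filter_congr fun k hk => cdE_mul_cdE_mul_cdE_eq_iff hi hj (hI k hk)]

lemma assocSpectrum_cdSignedBasis (hI : ∀ i ∈ I, i < 2 ^ n) :
    assocSpectrum (cdSignedBasis n I) =
      {m | ∃ i ∈ I, ∃ j ∈ I, 2 * cdAssocCount n I i j = m} := by
  ext m
  constructor
  · rintro ⟨x, hx, y, hy, rfl⟩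
    obtain ⟨s, i, hi, rfl⟩ := mem_cdSignedBasis.1 hx
    obtain ⟨t, j, hj, rfl⟩ := mem_cdSignedBasis.1 hy
    refine ⟨i, hi, j, hj, ?_⟩
    cases s <;> cases t <;> simp [assocCount_cdSignedBasis hI (hI i hi) (hI j hj)]
  · rintro ⟨i, hi, j, hj, rfl⟩
    exact ⟨_, ⟨i, hi, .inl rfl⟩, _, ⟨j, hj, .inl rfl⟩,
      assocCount_cdSignedBasis hI (hI i hi) (hI j hj)⟩

end SignedBasis

lemma LoopIso.assocSpectrum_eq {A B : Set TT} (h : LoopIso A B)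
    (hA : ∀ x ∈ A, ∀ y ∈ A, x * y ∈ A) : assocSpectrum A = assocSpectrum B := by
  obtain ⟨f, hf, hmul⟩ := h
  exact (assocSpectrum_eq_of_bijOn hf hmul hA).symm

structure IsLoopIndexSet (I : Finset ℕ) : Prop where
  lt_32 : ∀ i ∈ I, i < 32
  zero_mem : 0 ∈ I
  xor_mem : ∀ i ∈ I, ∀ j ∈ I, i ^^^ j ∈ I

namespace IsLoopIndexSet

variable {I : Finset ℕ}

lemma isSubloop (hI : IsLoopIndexSet I) : IsSubloop (cdSignedBasis 5 I) :=
  ⟨fun _ ⟨i, hi, hx⟩ => ⟨i, hI.lt_32 i hi, hx⟩, ⟨_, 0, hI.zero_mem, .inl rfl⟩,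
    fun _ hx _ hy => mul_mem_cdSignedBasis hI.lt_32 hI.xor_mem hx hy⟩

lemma not_loopIso (hI : IsLoopIndexSet I) {J : Finset ℕ} (hJ : ∀ j ∈ J, j < 32) {m : ℕ}
    (hmI : ∃ i ∈ I, ∃ j ∈ I, 2 * cdAssocCount 5 I i j = m)
    (hmJ : ∀ i ∈ J, ∀ j ∈ J, 2 * cdAssocCount 5 J i j ≠ m) :
    ¬ LoopIso (cdSignedBasis 5 I) (cdSignedBasis 5 J) := by
  intro h
  have hspec := h.assocSpectrum_eq fun _ hx _ hy => mul_mem_cdSignedBasis hI.lt_32 hI.xor_mem hx hy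
  rw [assocSpectrum_cdSignedBasis hI.lt_32, assocSpectrum_cdSignedBasis hJ] at hspec
  obtain ⟨i, hi, j, hj, hm⟩ := hspec.subset hmI
  exact hmJ i hi j hj hm

end IsLoopIndexSet

def J0 : Finset ℕ := Finset.range 16
def Jα : Finset ℕ := {0, 1, 2, 3, 8, 9, 10, 11, 20, 21, 22, 23, 28, 29, 30, 31}
def Jβ : Finset ℕ := {0, 1, 2, 3, 12, 13, 14, 15, 20, 21, 22, 23, 24, 25, 26, 27}
def Jγ : Finset ℕ := {0, 1, 2, 3, 4, 5, 6, 7, 24, 25, 26, 27, 28, 29, 30, 31}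

lemma SL_eq : SL = cdSignedBasis 5 J0 := by
  ext
  simp [SL, cdSignedBasis, J0, e]

lemma SLα_eq : SLα = cdSignedBasis 5 Jα := congrArg (cdSignedBasis 5) (by ext; simp [idxα, Jα])
lemma SLβ_eq : SLβ = cdSignedBasis 5 Jβ := congrArg (cdSignedBasis 5) (by ext; simp [idxβ, Jβ])
lemma SLγ_eq : SLγ = cdSignedBasis 5 Jγ := congrArg (cdSignedBasis 5) (by ext; simp [idxγ, Jγ])

/-- The four 32-element sets `S_L`, `S_L^α`, `S_L^β`, `S_L^γ` are subloops of `T_L`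
and are pairwise non-isomorphic. -/
theorem stmt8 :
    SL.ncard = 32 ∧ SLα.ncard = 32 ∧ SLβ.ncard = 32 ∧ SLγ.ncard = 32 ∧
    IsSubloop SL ∧ IsSubloop SLα ∧ IsSubloop SLβ ∧ IsSubloop SLγ ∧
    ¬ LoopIso SL SLα ∧ ¬ LoopIso SL SLβ ∧ ¬ LoopIso SL SLγ ∧
    ¬ LoopIso SLα SLβ ∧ ¬ LoopIso SLα SLγ ∧ ¬ LoopIso SLβ SLγ := by
  have h0 : IsLoopIndexSet J0 := ⟨by decide, by decide, by decide⟩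
  have hα : IsLoopIndexSet Jα := ⟨by decide, by decide, by decide⟩
  have hβ : IsLoopIndexSet Jβ := ⟨by decide, by decide, by decide⟩
  have hγ : IsLoopIndexSet Jγ := ⟨by decide, by decide, by decide⟩
  rw [SL_eq, SLα_eq, SLβ_eq, SLγ_eq, ncard_cdSignedBasis h0.lt_32, ncard_cdSignedBasis hα.lt_32,
    ncard_cdSignedBasis hβ.lt_32, ncard_cdSignedBasis hγ.lt_32]
  exact ⟨rfl, rfl, rfl, rfl, h0.isSubloop, hα.isSubloop, hβ.isSubloop, hγ.isSubloop,
    h0.not_loopIso hα.lt_32 (m := 8) (by decide +kernel) (by decide +kernel),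
    h0.not_loopIso hβ.lt_32 (m := 8) (by decide +kernel) (by decide +kernel),
    h0.not_loopIso hγ.lt_32 (m := 8) (by decide +kernel) (by decide +kernel),
    hα.not_loopIso hβ.lt_32 (m := 16) (by decide +kernel) (by decide +kernel),
    hα.not_loopIso hγ.lt_32 (m := 24) (by decide +kernel) (by decide +kernel),
    hβ.not_loopIso hγ.lt_32 (m := 28) (by decide +kernel) (by decide +kernel)⟩
end

section
/- The loop T_L has the inverse property: for all x, y ∈ T_L, x⁻¹·(x·y) = y and (y·x)·x⁻¹ = y. -/
/-! Writing `u⋆` for the Cayley–Dickson conjugate, every signed basis vector `u` satisfies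
`u⋆ (u y) = y` and `(y u) u⋆ = y` for *every* `y`, and `u⋆` is the loop inverse of `u`.
This goes by induction on the doubling: a basis vector of `A × A` is `(a, 0)` or `(0, b)` with
`a`, `b` basis vectors of `A`, and expanding the doubling formula reduces both identities to the
same identities for `a`, `b` and their conjugates. All that is used about `A` is that it is a
non-associative ring on which conjugation is an anti-involution. -/

namespace CD

instance instStar (n : ℕ) : Star (CD n) := ⟨cdConj n⟩

variable {n : ℕ}

-- A bare pair `(a, b)` would pick up the instances of `CD n × CD n` instead of `CD (n + 1)`.
abbrev mk (a b : CD n) : CD (n + 1) := (a, b)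

theorem star_mk (a b : CD n) : star (mk a b) = mk (star a) (-b) := rfl

theorem mk_add_mk (a b c d : CD n) : mk a b + mk c d = mk (a + c) (b + d) := rfl

theorem neg_mk (a b : CD n) : -mk a b = mk (-a) (-b) := rfl

theorem mk_mul_mk (a b c d : CD n) :
    mk a b * mk c d = mk (a * c - d * star b) (star a * d + c * b) := rfl

protected theorem star_add : ∀ {n : ℕ} (x y : CD n), star (x + y) = star x + star y
  | 0, _, _ => rfl
  | _ + 1, (a, b), (c, d) => by
      rw [mk_add_mk, star_mk, star_mk, star_mk, CD.star_add, neg_add, mk_add_mk]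

protected theorem star_star : ∀ {n : ℕ} (x : CD n), star (star x) = x
  | 0, _ => rfl
  | _ + 1, (a, b) => by rw [star_mk, star_mk, CD.star_star, neg_neg]

instance instStarAddMonoid (n : ℕ) : StarAddMonoid (CD n) where
  star_involutive := CD.star_star
  star_add := CD.star_add

theorem mul_add_and_add_mul : ∀ {n : ℕ} (x y z : CD n),
    x * (y + z) = x * y + x * z ∧ (x + y) * z = x * z + y * z
  | 0, x, y, z => ⟨mul_add (R := ℝ) x y z, add_mul (R := ℝ) x y z⟩
  | _ + 1, (a, b), (c, d), (p, q) => by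
      simp only [mk_add_mk, mk_mul_mk, star_add, (mul_add_and_add_mul _ _ _).1,
        (mul_add_and_add_mul _ _ _).2]
      constructor <;> congr 1 <;> abel

instance instNonUnitalNonAssocRing (n : ℕ) : NonUnitalNonAssocRing (CD n) :=
  { cdAddCommGroup n, cdMulInst n with
    left_distrib := fun x y z => (mul_add_and_add_mul x y z).1
    right_distrib := fun x y z => (mul_add_and_add_mul x y z).2
    zero_mul := fun x => left_eq_add.mp (by rw [← (mul_add_and_add_mul 0 0 x).2, add_zero])
    mul_zero := fun x => left_eq_add.mp (by rw [← (mul_add_and_add_mul x 0 0).1, add_zero]) }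

protected theorem star_mul : ∀ {n : ℕ} (x y : CD n), star (x * y) = star y * star x
  | 0, x, y => mul_comm (G := ℝ) x y
  | _ + 1, (a, b), (c, d) => by
      simp only [mk_mul_mk, star_mk, star_sub, star_neg, star_star, CD.star_mul, mul_neg,
        neg_mul, neg_neg]
      congr 1
      abel

instance instStarRing (n : ℕ) : StarRing (CD n) where
  star_mul := CD.star_mul
  star_add := CD.star_add

def HasInverseProperty (u : CD n) : Prop :=
  ∀ y, star u * (u * y) = y ∧ y * u * star u = y

theorem HasInverseProperty.neg {u : CD n} (hu : HasInverseProperty u) :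
    HasInverseProperty (-u) := by
  simpa only [HasInverseProperty, star_neg, neg_mul_neg, mul_neg, neg_mul, neg_neg] using hu

theorem hasInverseProperty_mk_zero {a : CD n} (ha : HasInverseProperty a)
    (ha' : HasInverseProperty (star a)) : HasInverseProperty (mk a 0) := by
  rw [HasInverseProperty, star_star] at ha'
  rintro ⟨c, d⟩
  simp only [mk_mul_mk, star_mk, star_zero, star_star, mul_zero, zero_mul, sub_zero, add_zero,
    zero_add, neg_zero]
  rw [(ha c).1, (ha' d).1, (ha c).2, (ha d).1]
  exact ⟨rfl, rfl⟩

theorem hasInverseProperty_zero_mk {b : CD n} (hb : HasInverseProperty b)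
    (hb' : HasInverseProperty (star b)) : HasInverseProperty (mk 0 b) := by
  rw [HasInverseProperty, star_star] at hb'
  rintro ⟨c, d⟩
  simp only [mk_mul_mk, star_mk, star_zero, star_neg, star_mul, star_star, mul_zero, zero_mul,
    mul_neg, neg_mul, neg_neg, zero_sub, add_zero, zero_add, neg_zero, sub_neg_eq_add]
  rw [(hb c).2, (hb' d).2, (hb' c).1]
  exact ⟨rfl, rfl⟩

theorem cdE_succ_of_lt {k : ℕ} (hk : k < 2 ^ n) : cdE (n + 1) k = mk (cdE n k) 0 := if_pos hk

theorem cdE_succ_of_not_lt {k : ℕ} (hk : ¬k < 2 ^ n) :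
    cdE (n + 1) k = mk 0 (cdE n (k - 2 ^ n)) := if_neg hk

theorem hasInverseProperty_cdE :
    ∀ n k, HasInverseProperty (cdE n k) ∧ HasInverseProperty (star (cdE n k))
  | 0, _ =>
    have h : HasInverseProperty (cdE 0 _) := fun y =>
      ⟨(one_mul (M := ℝ) _).trans (one_mul (M := ℝ) y),
        (mul_one (M := ℝ) _).trans (mul_one (M := ℝ) y)⟩
    ⟨h, h⟩
  | n + 1, k => by
    by_cases hk : k < 2 ^ n
    · obtain ⟨h, h'⟩ := hasInverseProperty_cdE n k
      rw [cdE_succ_of_lt hk, star_mk, neg_zero]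
      exact ⟨hasInverseProperty_mk_zero h h',
        hasInverseProperty_mk_zero h' (by rwa [star_star])⟩
    · obtain ⟨h, h'⟩ := hasInverseProperty_cdE n (k - 2 ^ n)
      rw [cdE_succ_of_not_lt hk, star_mk, star_zero]
      exact ⟨hasInverseProperty_zero_mk h h',
        hasInverseProperty_zero_mk h.neg (by rw [star_neg]; exact h'.neg)⟩

theorem star_cdE_zero : ∀ n, star (cdE n 0) = cdE n 0
  | 0 => rfl
  | n + 1 => by rw [cdE_succ_of_lt (Nat.two_pow_pos n), star_mk, star_cdE_zero, neg_zero]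

theorem star_cdE_of_ne_zero : ∀ n k, k < 2 ^ n → k ≠ 0 → star (cdE n k) = -cdE n k
  | 0, _, hk, hk0 => absurd hk (by omega)
  | n + 1, k, _, hk0 => by
    by_cases hk : k < 2 ^ n
    · rw [cdE_succ_of_lt hk, star_mk, star_cdE_of_ne_zero n k hk hk0, neg_mk, neg_zero]
    · rw [cdE_succ_of_not_lt hk, star_mk, star_zero, neg_mk, neg_zero]

end CD

/-- `T_L` has the inverse property: `x⁻¹·(x·y) = y` and `(y·x)·x⁻¹ = y`, where
`e 0⁻¹ = e 0`, `(-e 0)⁻¹ = -e 0`, and `(±e i)⁻¹ = ∓e i` for `1 ≤ i ≤ 31`. -/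
theorem stmt13 (inv : TT → TT)
    (h0 : inv (e 0) = e 0) (h0' : inv (-e 0) = -e 0)
    (hi : ∀ i, 1 ≤ i → i ≤ 31 → inv (e i) = -e i ∧ inv (-e i) = e i) :
    ∀ x ∈ TL, ∀ y ∈ TL, inv x * (x * y) = y ∧ (y * x) * inv x = y := by
  have inv_eq_star : ∀ x ∈ TL, inv x = star x := by
    rintro x ⟨i, hi32, rfl | rfl⟩ <;> rcases eq_or_ne i 0 with rfl | hi0
    · exact h0.trans (CD.star_cdE_zero 5).symm
    · exact (hi i (by omega) (by omega)).1.trans (CD.star_cdE_of_ne_zero 5 i hi32 hi0).symm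
    · rw [h0', star_neg]
      exact congrArg _ (CD.star_cdE_zero 5).symm
    · rw [(hi i (by omega) (by omega)).2, star_neg, e, CD.star_cdE_of_ne_zero 5 i hi32 hi0,
        neg_neg]
  have inverse_property : ∀ x ∈ TL, CD.HasInverseProperty x := by
    rintro x ⟨i, -, rfl | rfl⟩
    exacts [(CD.hasInverseProperty_cdE 5 i).1, (CD.hasInverseProperty_cdE 5 i).1.neg]
  intro x hx y _
  rw [inv_eq_star x hx]
  exact inverse_property x hx y
end
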